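/- arXiv:2111.14654 — 8 statements merged into one kernel-verified Lean document; each statement's English description precedes it below -/
import Mathlib

section
/- Let I be a finite set of items, let B be a real number with 0 < B < 1, and let γ : I → ℝ be a nonnegative weight function with ∑_{a ∈ I} γ(a) = 1. Let v be a set function on subsets of I satisfying v(S) ≥ ∑_{a ∈ S} γ(a) for every S ⊆ I. Suppose I is partitioned into two disjoint sets I₁ and I₂ (I₁ ∪ I₂ = I) such that ∑_{a ∈ I₂} √B · γ(a) ≤ B. Then v(I₁) − ∑_{a ∈ I₁} √B · γ(a) ≥ (1 − √B)². -/
/-!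
Bidder 1's additive bids are `√B · γ`, so the adversary, whose payments are capped by `B`, can
afford items of total weight at most `√B`. Bidder 1 therefore wins weight `s ≥ 1 - √B`, is worth
at least `s` on it by XOS domination, and keeps utility `v I₁ - √B s ≥ (1 - √B) s ≥ (1 - √B)²`.
-/

open Finset

theorem one_sub_sqrt_le_sum_of_budget {ι : Type*} [DecidableEq ι] {I₁ I₂ : Finset ι}
    {γ : ι → ℝ} {B : ℝ} (hB : 0 < B) (hdisj : Disjoint I₁ I₂)
    (htotal : ∑ a ∈ I₁ ∪ I₂, γ a = 1) (hbudget : ∑ a ∈ I₂, √B * γ a ≤ B) :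
    1 - √B ≤ ∑ a ∈ I₁, γ a := by
  rw [sum_union hdisj] at htotal
  rw [← mul_sum] at hbudget
  have hI₂ : ∑ a ∈ I₂, γ a ≤ √B :=
    le_of_mul_le_mul_left (hbudget.trans_eq (Real.mul_self_sqrt hB.le).symm) (Real.sqrt_pos.2 hB)
  linarith

theorem sq_one_sub_le_sub_mul {c s w : ℝ} (hc : c ≤ 1) (hs : 1 - c ≤ s) (hw : s ≤ w) :
    (1 - c) ^ 2 ≤ w - c * s :=
  calc (1 - c) ^ 2 = (1 - c) * (1 - c) := sq _
    _ ≤ (1 - c) * s := mul_le_mul_of_nonneg_left hs (sub_nonneg.2 hc)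
    _ ≤ w - c * s := by linarith

theorem xos_sequential_lower_bound_general {ι : Type*} [DecidableEq ι] (I : Finset ι) (B : ℝ)
    (hB0 : 0 < B) (hB1 : B < 1)
    (γ : ι → ℝ) (hγsum : ∑ a ∈ I, γ a = 1)
    (v : Finset ι → ℝ) (hv : ∀ S ⊆ I, ∑ a ∈ S, γ a ≤ v S)
    (I₁ I₂ : Finset ι) (hdisj : Disjoint I₁ I₂) (hunion : I₁ ∪ I₂ = I)
    (hbudget : ∑ a ∈ I₂, Real.sqrt B * γ a ≤ B) :
    (1 - Real.sqrt B) ^ 2 ≤ v I₁ - ∑ a ∈ I₁, Real.sqrt B * γ a := by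
  subst hunion
  have hwin : 1 - √B ≤ ∑ a ∈ I₁, γ a := one_sub_sqrt_le_sum_of_budget hB0 hdisj hγsum hbudget
  have hsqrt : √B ≤ 1 := Real.sqrt_le_one.2 hB1.le
  rw [← mul_sum]
  exact sq_one_sub_le_sub_mul hsqrt hwin (hv I₁ subset_union_left)

/-- Deterministic core of the XOS lower bound for sequential auctions (Theorem 1). -/
theorem xos_sequential_lower_bound {ι : Type*} [DecidableEq ι] (I : Finset ι) (B : ℝ)
    (hB0 : 0 < B) (hB1 : B < 1)
    (γ : ι → ℝ) (hγ : ∀ a ∈ I, 0 ≤ γ a) (hγsum : ∑ a ∈ I, γ a = 1)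
    (v : Finset ι → ℝ) (hv : ∀ S ⊆ I, ∑ a ∈ S, γ a ≤ v S)
    (I₁ I₂ : Finset ι) (hdisj : Disjoint I₁ I₂) (hunion : I₁ ∪ I₂ = I)
    (hbudget : ∑ a ∈ I₂, Real.sqrt B * γ a ≤ B) :
    (1 - Real.sqrt B) ^ 2 ≤ v I₁ - ∑ a ∈ I₁, Real.sqrt B * γ a :=
  xos_sequential_lower_bound_general I B hB0 hB1 γ hγsum v hv I₁ I₂ hdisj hunion hbudget
end

section
/- For every integer m ≥ 2 and every real number x with 1/m² ≤ x ≤ (m−1)/m, the quantity α̃ = 1 − 2m(1 − √x) + 2√(m(m−1))·(1 − √x) satisfies α̃ ≥ 0. -/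
/-! With `s = √(m(m-1))` and `r = √x`, the quantity is `1 - 2(m - s)(1 - r)`. The lower bound on `x`
gives `m(1 - r) ≤ m - 1`, and `(m - s)(m + s) = m` with `m + s ≥ 2(m - 1)` (as `s ≥ m - 2`), so
`m · 2(m - s)(1 - r) ≤ 2(m - s)(m - 1) ≤ (m - s)(m + s) = m`. -/

open Real

lemma sub_two_le_sqrt_mul_sub_one (M : ℝ) : M - 2 ≤ √(M * (M - 1)) := by
  rcases le_or_gt M 2 with hM | hM
  · linarith [sqrt_nonneg (M * (M - 1))]
  · exact le_sqrt_of_sq_le (by nlinarith)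

lemma sqrt_mul_sub_one_le_self {M : ℝ} (hM : 0 ≤ M) : √(M * (M - 1)) ≤ M :=
  sqrt_le_iff.mpr ⟨hM, by nlinarith⟩

lemma sub_sqrt_mul_sub_one_mul_add {M : ℝ} (hM : 1 ≤ M) :
    (M - √(M * (M - 1))) * (M + √(M * (M - 1))) = M := by
  have hsq : √(M * (M - 1)) ^ 2 = M * (M - 1) := sq_sqrt (by nlinarith)
  linear_combination -hsq

lemma two_mul_sub_sqrt_mul_sub_one_mul_one_sub_le_one {M r : ℝ} (hM : 1 ≤ M) (hr : 1 ≤ M * r) :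
    2 * (M - √(M * (M - 1))) * (1 - r) ≤ 1 := by
  set s := √(M * (M - 1))
  have hgap : 0 ≤ M - s := sub_nonneg.mpr (sqrt_mul_sub_one_le_self (by linarith))
  have hs : 2 * (M - 1) ≤ M + s := by linarith [sub_two_le_sqrt_mul_sub_one M]
  refine le_of_mul_le_mul_left ?_ (by linarith : 0 < M)
  calc M * (2 * (M - s) * (1 - r)) = 2 * (M - s) * (M - M * r) := by ring
    _ ≤ (M - s) * (2 * (M - 1)) := by nlinarith
    _ ≤ (M - s) * (M + s) := mul_le_mul_of_nonneg_left hs hgap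
    _ = M * 1 := by rw [sub_sqrt_mul_sub_one_mul_add hM, mul_one]

lemma one_le_mul_sqrt_of_inv_sq_le {M x : ℝ} (hM : 0 < M) (hx : 1 / M ^ 2 ≤ x) :
    1 ≤ M * √x := by
  have h : 1 / M ≤ √x := by
    rw [← sqrt_sq (by positivity : 0 ≤ 1 / M), div_pow, one_pow]
    exact sqrt_le_sqrt hx
  rwa [div_le_iff₀' hM] at h

theorem alpha_tilde_nonneg_general (m : ℕ) (hm : 2 ≤ m) (x : ℝ)
    (hx1 : 1 / (m : ℝ) ^ 2 ≤ x) :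
    0 ≤ 1 - 2 * (m : ℝ) * (1 - Real.sqrt x)
        + 2 * Real.sqrt ((m : ℝ) * ((m : ℝ) - 1)) * (1 - Real.sqrt x) := by
  have hM : (1 : ℝ) ≤ m := by exact_mod_cast (by omega : 1 ≤ m)
  have hbound := two_mul_sub_sqrt_mul_sub_one_mul_one_sub_le_one hM
    (one_le_mul_sqrt_of_inv_sq_le (by linarith) hx1)
  linarith

/-- Claim 1: the adversary's candidate bid ratio α̃ is nonnegative. -/
theorem alpha_tilde_nonneg (m : ℕ) (hm : 2 ≤ m) (x : ℝ)
    (hx1 : 1 / (m : ℝ) ^ 2 ≤ x) (hx2 : x ≤ ((m : ℝ) - 1) / m) :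
    0 ≤ 1 - 2 * (m : ℝ) * (1 - Real.sqrt x)
        + 2 * Real.sqrt ((m : ℝ) * ((m : ℝ) - 1)) * (1 - Real.sqrt x) :=
  alpha_tilde_nonneg_general m hm x hx1
end

section
/- For every integer m ≥ 2 and every real number x with 1/m² ≤ x ≤ (m−1)/m, the quantity α̃ = 1 − 2m(1 − √x) + 2√(m(m−1))·(1 − √x) satisfies α̃ ≤ min(1, m·x). -/
/-!
With `d = m - √(m(m-1))` one has `α̃ = 1 - 2d(1 - √x)`, so `α̃ ≤ 1` because `0 ≤ d` and `√x ≤ 1`.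
Moreover `d² = m(2d - 1)`, which makes `m(mx - α̃) = (m√x - d)²` a perfect square, whence `α̃ ≤ mx`.
-/

open Real

noncomputable def alphaTilde (m x : ℝ) : ℝ :=
  1 - 2 * m * (1 - √x) + 2 * √(m * (m - 1)) * (1 - √x)

lemma sqrt_mul_sub_one_le {m : ℝ} (hm : 0 ≤ m) : √(m * (m - 1)) ≤ m :=
  (sqrt_le_left hm).2 (by nlinarith)

lemma alphaTilde_eq (m x : ℝ) :
    alphaTilde m x = 1 - 2 * (m - √(m * (m - 1))) * (1 - √x) := by
  unfold alphaTilde; ring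

lemma alphaTilde_le_one {m x : ℝ} (hm : 0 ≤ m) (hx : x ≤ 1) : alphaTilde m x ≤ 1 := by
  have hd : 0 ≤ m - √(m * (m - 1)) := sub_nonneg.2 (sqrt_mul_sub_one_le hm)
  have hs : 0 ≤ 1 - √x := sub_nonneg.2 (sqrt_le_one.2 hx)
  rw [alphaTilde_eq]
  linarith [mul_nonneg hd hs]

lemma mul_mul_sub_alphaTilde {m x : ℝ} (hm : 0 ≤ m * (m - 1)) (hx : 0 ≤ x) :
    m * (m * x - alphaTilde m x) = (m * √x - (m - √(m * (m - 1)))) ^ 2 := by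
  have hs : √x ^ 2 = x := sq_sqrt hx
  have hc : √(m * (m - 1)) ^ 2 = m * (m - 1) := sq_sqrt hm
  rw [alphaTilde_eq]
  linear_combination (-m ^ 2) * hs - hc

lemma alphaTilde_le_mul {m x : ℝ} (hm : 1 ≤ m) (hx : 0 ≤ x) : alphaTilde m x ≤ m * x := by
  have hsq : 0 ≤ m * (m * x - alphaTilde m x) :=
    (mul_mul_sub_alphaTilde (m := m) (by nlinarith) hx).symm ▸ sq_nonneg _
  linarith [nonneg_of_mul_nonneg_right hsq (by linarith : (0 : ℝ) < m)]

/-- Claim 2: the adversary's candidate bid ratio α̃ is at most α_max = min(1, m·x). -/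
theorem alpha_tilde_le_alpha_max (m : ℕ) (hm : 2 ≤ m) (x : ℝ)
    (hx1 : 1 / (m : ℝ) ^ 2 ≤ x) (hx2 : x ≤ ((m : ℝ) - 1) / m) :
    1 - 2 * (m : ℝ) * (1 - Real.sqrt x)
        + 2 * Real.sqrt ((m : ℝ) * ((m : ℝ) - 1)) * (1 - Real.sqrt x)
      ≤ min 1 ((m : ℝ) * x) := by
  have hm1 : (1 : ℝ) ≤ m := by exact_mod_cast (by omega : 1 ≤ m)
  have hx0 : 0 ≤ x := le_trans (by positivity) hx1
  have hx_le_one : x ≤ 1 := hx2.trans (div_le_one_of_le₀ (by linarith) (by positivity))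
  exact le_min (alphaTilde_le_one (by positivity) hx_le_one) (alphaTilde_le_mul hm1 hx0)
end

section
/- For every integer m ≥ 2 and every real number x with 1/m² ≤ x ≤ (m−1)/m, setting α̃ = 1 − 2m(1 − √x) + 2√(m(m−1))·(1 − √x) and f(y) = (1 − √y)², it holds that (1 − α̃)/m + ((m−1)/m)·( f(m·x/(m−1)) + 1/√(m−1) ) ≤ f(x) + 1/√m. -/
/-!
Write `a = √m`, `b = √(m - 1)` and `s = √x`, so that `√(m(m - 1)) = ab` and `√(mx/(m - 1)) = as/b`.
Expanding, the left-hand side equals `(1 - s)² + 1/a + (a - b)(a - b - 1)/a²`, and the last term is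
nonpositive because `a - b = 1/(a + b)` lies in `[0, 1]`.
-/

open Real

lemma sqrt_sub_sqrt_sub_one_mem_Icc {y : ℝ} (hy : 1 ≤ y) :
    √y - √(y - 1) ∈ Set.Icc 0 1 := by
  have ha : √y ^ 2 = y := sq_sqrt (by linarith)
  have hb : √(y - 1) ^ 2 = y - 1 := sq_sqrt (by linarith)
  have ha1 : 1 ≤ √y := one_le_sqrt.mpr hy
  have hb0 : 0 ≤ √(y - 1) := sqrt_nonneg _
  have hprod : (√y - √(y - 1)) * (√y + √(y - 1)) = 1 := by nlinarith
  constructor <;> nlinarith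

lemma profit_expansion {a b s : ℝ} (ha : a ≠ 0) (hb : b ≠ 0) :
    (1 - (1 - 2 * a ^ 2 * (1 - s) + 2 * (a * b) * (1 - s))) / a ^ 2
        + b ^ 2 / a ^ 2 * ((1 - a * s / b) ^ 2 + 1 / b)
      = (1 - s) ^ 2 + 1 / a + (a - b) * (a - b - 1) / a ^ 2 := by
  field_simp
  ring

theorem g_bound_general (m : ℕ) (hm : 2 ≤ m) (x : ℝ) :
    (1 - (1 - 2 * (m : ℝ) * (1 - Real.sqrt x)
            + 2 * Real.sqrt ((m : ℝ) * ((m : ℝ) - 1)) * (1 - Real.sqrt x))) / m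
      + (((m : ℝ) - 1) / m)
          * ((1 - Real.sqrt ((m : ℝ) * x / ((m : ℝ) - 1))) ^ 2
              + 1 / Real.sqrt ((m : ℝ) - 1))
      ≤ (1 - Real.sqrt x) ^ 2 + 1 / Real.sqrt m := by
  have hm1 : (1 : ℝ) < m := by exact_mod_cast hm
  have hm0 : (0 : ℝ) ≤ m := by linarith
  have hexpand := profit_expansion (s := √x) (sqrt_pos.mpr (by linarith : (0 : ℝ) < m)).ne'
    (sqrt_pos.mpr (by linarith : (0 : ℝ) < m - 1)).ne'
  rw [sq_sqrt hm0, sq_sqrt (by linarith)] at hexpand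
  rw [sqrt_mul hm0, sqrt_div' _ (by linarith), sqrt_mul hm0, hexpand]
  obtain ⟨hd0, hd1⟩ := sqrt_sub_sqrt_sub_one_mem_Icc hm1.le
  have hcorrection : (√m - √(m - 1)) * (√m - √(m - 1) - 1) / m ≤ 0 :=
    div_nonpos_of_nonpos_of_nonneg (mul_nonpos_of_nonneg_of_nonpos hd0 (by linarith)) hm0
  linarith

/-- Claim 3: g_m(x, α̃) ≤ f(x) + 1/√m, with the induction hypothesis bound plugged in. -/
theorem g_bound (m : ℕ) (hm : 2 ≤ m) (x : ℝ)
    (hx1 : 1 / (m : ℝ) ^ 2 ≤ x) (hx2 : x ≤ ((m : ℝ) - 1) / m) :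
    (1 - (1 - 2 * (m : ℝ) * (1 - Real.sqrt x)
            + 2 * Real.sqrt ((m : ℝ) * ((m : ℝ) - 1)) * (1 - Real.sqrt x))) / m
      + (((m : ℝ) - 1) / m)
          * ((1 - Real.sqrt ((m : ℝ) * x / ((m : ℝ) - 1))) ^ 2
              + 1 / Real.sqrt ((m : ℝ) - 1))
      ≤ (1 - Real.sqrt x) ^ 2 + 1 / Real.sqrt m :=
  g_bound_general m hm x
end

section
/- For every integer m ≥ 2 and every real number x with 1/m² ≤ x ≤ (m−1)/m, setting α̃ = 1 − 2m(1 − √x) + 2√(m(m−1))·(1 − √x), the following exact identity holds: (1 − √x)² = ((m−1)/m)·( 1 − √((m·x − α̃)/(m−1)) )². Equivalently, 2√x − (1 + α̃)/m = 2·((m−1)/m)·√((m·x − α̃)/(m−1)). -/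
/-!
Write `s = √x` and `t = √(m(m-1))`, so that `α̃ = 1 - 2m(1-s) + 2t(1-s)`. Because `t² = m(m-1)`,
the argument `(m s² - α̃)/(m-1)` is the perfect square `(1 - t(1-s)/(m-1))²`, whose base is
nonnegative since `t ≤ m` and `m s ≥ 1`. Hence `1 - √((m x - α̃)/(m-1)) = t(1-s)/(m-1)`, and both
identities reduce to polynomial identities in `s` and `t` modulo `t² = m(m-1)`.
-/

namespace AdditiveAuction

variable {m s t : ℝ}

lemma div_sub_one_eq_sq (hm : m - 1 ≠ 0) (ht : t ^ 2 = m * (m - 1)) :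
    (m * s ^ 2 - (1 - 2 * m * (1 - s) + 2 * t * (1 - s))) / (m - 1)
      = (1 - t * (1 - s) / (m - 1)) ^ 2 := by
  field_simp
  linear_combination (-(1 - s) ^ 2) * ht

lemma mul_one_sub_le_sub_one (hm : 1 ≤ m) (hms : 1 ≤ m * s) (ht : 0 ≤ t) (htm : t ≤ m) :
    t * (1 - s) ≤ m - 1 := by
  rcases le_total s 1 with hs | hs
  · nlinarith [mul_le_mul_of_nonneg_right htm (sub_nonneg.mpr hs)]
  · nlinarith [mul_nonpos_of_nonneg_of_nonpos ht (sub_nonpos.mpr hs)]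

lemma sqrt_mul_sub_one_le (hm : 1 ≤ m) : √(m * (m - 1)) ≤ m :=
  Real.sqrt_le_iff.mpr ⟨by linarith, by nlinarith⟩

lemma sqrt_div_sub_one_eq (hm : 1 < m) (hms : 1 ≤ m * s) :
    √((m * s ^ 2 - (1 - 2 * m * (1 - s) + 2 * √(m * (m - 1)) * (1 - s))) / (m - 1))
      = 1 - √(m * (m - 1)) * (1 - s) / (m - 1) := by
  have hm_sub : 0 < m - 1 := sub_pos.mpr hm
  have ht : √(m * (m - 1)) ^ 2 = m * (m - 1) := Real.sq_sqrt (by positivity)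
  have hbase : 0 ≤ 1 - √(m * (m - 1)) * (1 - s) / (m - 1) := by
    rw [sub_nonneg, div_le_one hm_sub]
    exact mul_one_sub_le_sub_one hm.le hms (Real.sqrt_nonneg _) (sqrt_mul_sub_one_le hm.le)
  rw [div_sub_one_eq_sq hm_sub.ne' ht, Real.sqrt_sq hbase]

end AdditiveAuction

open AdditiveAuction in
theorem f_scaling_identity_general (m : ℕ) (hm : 2 ≤ m) (x : ℝ)
    (hx1 : 1 / (m : ℝ) ^ 2 ≤ x) :
    (1 - Real.sqrt x) ^ 2
        = (((m : ℝ) - 1) / m)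
            * (1 - Real.sqrt (((m : ℝ) * x
                - (1 - 2 * (m : ℝ) * (1 - Real.sqrt x)
                    + 2 * Real.sqrt ((m : ℝ) * ((m : ℝ) - 1)) * (1 - Real.sqrt x)))
                / ((m : ℝ) - 1))) ^ 2
    ∧ 2 * Real.sqrt x
        - (1 + (1 - 2 * (m : ℝ) * (1 - Real.sqrt x)
            + 2 * Real.sqrt ((m : ℝ) * ((m : ℝ) - 1)) * (1 - Real.sqrt x))) / m
        = 2 * (((m : ℝ) - 1) / m)
            * Real.sqrt (((m : ℝ) * x
                - (1 - 2 * (m : ℝ) * (1 - Real.sqrt x)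
                    + 2 * Real.sqrt ((m : ℝ) * ((m : ℝ) - 1)) * (1 - Real.sqrt x)))
                / ((m : ℝ) - 1)) := by
  have hm_one : (1 : ℝ) < m := by exact_mod_cast hm
  have hm0 : (0 : ℝ) < m := by linarith
  have hm_sub : (m : ℝ) - 1 ≠ 0 := sub_ne_zero.mpr hm_one.ne'
  have hx : Real.sqrt x ^ 2 = x := Real.sq_sqrt (le_trans (by positivity) hx1)
  have hms : 1 ≤ (m : ℝ) * Real.sqrt x := by
    have := Real.sqrt_le_sqrt hx1
    rw [one_div, ← inv_pow, Real.sqrt_sq (by positivity)] at this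
    rwa [← inv_mul_le_iff₀ hm0, mul_one]
  have ht : Real.sqrt ((m : ℝ) * (m - 1)) ^ 2 = m * (m - 1) := Real.sq_sqrt (by nlinarith)
  have hroot := sqrt_div_sub_one_eq hm_one hms
  rw [hx] at hroot
  rw [hroot]
  constructor
  · field_simp
    linear_combination (-(1 - Real.sqrt x) ^ 2) * ht
  · field_simp
    ring

/-- The exact algebraic identity inside Claim 4: f(x) = ((m-1)/m)·f((m·x − α̃)/(m−1)),
    equivalently 2√x − (1 + α̃)/m = 2·((m−1)/m)·√((m·x − α̃)/(m−1)). -/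
theorem f_scaling_identity (m : ℕ) (hm : 2 ≤ m) (x : ℝ)
    (hx1 : 1 / (m : ℝ) ^ 2 ≤ x) (hx2 : x ≤ ((m : ℝ) - 1) / m) :
    (1 - Real.sqrt x) ^ 2
        = (((m : ℝ) - 1) / m)
            * (1 - Real.sqrt (((m : ℝ) * x
                - (1 - 2 * (m : ℝ) * (1 - Real.sqrt x)
                    + 2 * Real.sqrt ((m : ℝ) * ((m : ℝ) - 1)) * (1 - Real.sqrt x)))
                / ((m : ℝ) - 1))) ^ 2
    ∧ 2 * Real.sqrt x
        - (1 + (1 - 2 * (m : ℝ) * (1 - Real.sqrt x)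
            + 2 * Real.sqrt ((m : ℝ) * ((m : ℝ) - 1)) * (1 - Real.sqrt x))) / m
        = 2 * (((m : ℝ) - 1) / m)
            * Real.sqrt (((m : ℝ) * x
                - (1 - 2 * (m : ℝ) * (1 - Real.sqrt x)
                    + 2 * Real.sqrt ((m : ℝ) * ((m : ℝ) - 1)) * (1 - Real.sqrt x)))
                / ((m : ℝ) - 1)) :=
  f_scaling_identity_general m hm x hx1
end

section
/- Let I be a finite set of items, let B be a real number with 0 < B < 1, and let γ : I → ℝ be a nonnegative weight function with ∑_{a ∈ I} γ(a) = 1. Let v be a set function on subsets of I satisfying v(S) ≥ ∑_{a ∈ S} γ(a) for every S ⊆ I. Let b : I → ℝ be nonnegative bids with ∑_{a ∈ I} b(a) ≤ B, and let I₁ ⊆ I be any subset such that b(a) ≥ γ(a) for every a ∉ I₁. Then v(I₁) − ∑_{a ∈ I₁} b(a) ≥ 1 − B. -/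
theorem simultaneous_second_price_bound_general {ι : Type*} (I : Finset ι) (B : ℝ)
    (γ : ι → ℝ) (hγsum : ∑ a ∈ I, γ a = 1)
    (v : Finset ι → ℝ) (hv : ∀ S ⊆ I, ∑ a ∈ S, γ a ≤ v S)
    (b : ι → ℝ) (hbud : ∑ a ∈ I, b a ≤ B)
    (I₁ : Finset ι) (hI₁ : I₁ ⊆ I)
    (hlose : ∀ a ∈ I, a ∉ I₁ → γ a ≤ b a) :
    1 - B ≤ v I₁ - ∑ a ∈ I₁, b a := by
  have overbid : ∑ a ∈ I₁, (b a - γ a) ≤ ∑ a ∈ I, (b a - γ a) :=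
    Finset.sum_le_sum_of_subset_of_nonneg hI₁ fun a ha haI₁ => sub_nonneg.2 (hlose a ha haI₁)
  rw [Finset.sum_sub_distrib, Finset.sum_sub_distrib, hγsum] at overbid
  linarith [hv I₁ hI₁]

/-- Core of Theorem 3: second-price simultaneous auction guarantees profit at least 1 − B. -/
theorem simultaneous_second_price_bound {ι : Type*} (I : Finset ι) (B : ℝ)
    (hB0 : 0 < B) (hB1 : B < 1)
    (γ : ι → ℝ) (hγ : ∀ a ∈ I, 0 ≤ γ a) (hγsum : ∑ a ∈ I, γ a = 1)
    (v : Finset ι → ℝ) (hv : ∀ S ⊆ I, ∑ a ∈ S, γ a ≤ v S)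
    (b : ι → ℝ) (hb : ∀ a ∈ I, 0 ≤ b a) (hbud : ∑ a ∈ I, b a ≤ B)
    (I₁ : Finset ι) (hI₁ : I₁ ⊆ I)
    (hlose : ∀ a ∈ I, a ∉ I₁ → γ a ≤ b a) :
    1 - B ≤ v I₁ - ∑ a ∈ I₁, b a :=
  simultaneous_second_price_bound_general I B γ hγsum v hv b hbud I₁ hI₁ hlose
end

section
/- Let I be a finite index set, let γ : I → ℝ be nonnegative with ∑_{i ∈ I} γ(i) = 1, let B ∈ (0,1), and let b : I → ℝ satisfy 0 ≤ b(i) ≤ 1 for all i and ∑_{i ∈ I} γ(i)·b(i) ≤ B. Let X = (X_i)_{i ∈ I} be independent random variables each uniformly distributed on [0,1] (i.e. the product of Lebesgue measure restricted to [0,1] over I). Then the expectation E[ ∑_{i ∈ I} γ(i)·(1 − X_i)·𝟙[X_i > b(i)] ] ≥ (1 − B)²/2. -/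
/-!
Bidder 1's profit is a sum of terms each depending on one coordinate `X i`, so by linearity its
expectation is `∑ i, γ i * ∫₀¹ (1 - x) 𝟙[b i < x] dx = ∑ i, γ i * (1 - b i) ^ 2 / 2`. By convexity
of `t ↦ t ^ 2` this is at least `(∑ i, γ i * (1 - b i)) ^ 2 / 2 = (1 - ∑ i, γ i * b i) ^ 2 / 2`,
and the budget constraint bounds that below by `(1 - B) ^ 2 / 2`.
-/

open MeasureTheory Set

namespace MeasureTheory

variable {ι : Type*} [Fintype ι] {X : ι → Type*} {mX : ∀ i, MeasurableSpace (X i)}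
  {μ : (i : ι) → Measure (X i)} [∀ i, IsProbabilityMeasure (μ i)]
  {E : Type*} [NormedAddCommGroup E] [NormedSpace ℝ E]

lemma integral_sum_comp_eval {f : (i : ι) → X i → E} (hf : ∀ i, Integrable (f i) (μ i)) :
    ∫ x : Π i, X i, ∑ i, f i (x i) ∂Measure.pi μ = ∑ i, ∫ x, f i x ∂μ i := by
  rw [integral_finsetSum _ fun i _ => integrable_comp_eval (hf i)]
  exact Finset.sum_congr rfl fun i _ => integral_comp_eval (hf i).aestronglyMeasurable

end MeasureTheory

lemma one_sub_mul_boole_eq_indicator (c x : ℝ) :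
    (1 - x) * (if c < x then 1 else 0) = (Ioi c).indicator (fun y => 1 - y) x := by
  simp only [mul_boole, indicator_apply, mem_Ioi]

lemma integrableOn_one_sub_mul_boole (c : ℝ) :
    IntegrableOn (fun x : ℝ => (1 - x) * if c < x then 1 else 0) (Icc 0 1) := by
  simp only [one_sub_mul_boole_eq_indicator]
  exact (continuous_const.sub continuous_id).integrableOn_Icc.indicator measurableSet_Ioi

lemma integral_Icc_one_sub_mul_boole {c : ℝ} (hc0 : 0 ≤ c) (hc1 : c ≤ 1) :
    ∫ x in Icc 0 1, (1 - x) * (if c < x then 1 else 0) = (1 - c) ^ 2 / 2 := by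
  have hIcc : Ioi c ∩ Icc 0 1 = Ioc c 1 := by
    ext x
    simp only [mem_inter_iff, mem_Ioi, mem_Icc, mem_Ioc]
    constructor
    · rintro ⟨hcx, -, hx1⟩
      exact ⟨hcx, hx1⟩
    · rintro ⟨hcx, hx1⟩
      exact ⟨hcx, hc0.trans hcx.le, hx1⟩
  simp only [one_sub_mul_boole_eq_indicator]
  rw [integral_indicator measurableSet_Ioi, Measure.restrict_restrict measurableSet_Ioi, hIcc,
    ← intervalIntegral.integral_of_le hc1, intervalIntegral.integral_comp_sub_left (fun x => x),
    integral_id]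
  ring

lemma one_sub_sq_le_sum_mul_one_sub_sq {ι : Type*} [Fintype ι] {γ b : ι → ℝ} {B : ℝ}
    (hγ : ∀ i, 0 ≤ γ i) (hγsum : ∑ i, γ i = 1) (hb1 : ∀ i, b i ≤ 1) (hB1 : B < 1)
    (hbud : ∑ i, γ i * b i ≤ B) :
    (1 - B) ^ 2 ≤ ∑ i, γ i * (1 - b i) ^ 2 := by
  have hmean : ∑ i, γ i * (1 - b i) = 1 - ∑ i, γ i * b i := by
    simp only [mul_sub, mul_one, Finset.sum_sub_distrib, hγsum]
  calc (1 - B) ^ 2 ≤ (∑ i, γ i * (1 - b i)) ^ 2 := by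
        rw [hmean]
        exact pow_le_pow_left₀ (by linarith) (by linarith) 2
    _ ≤ ∑ i, γ i * (1 - b i) ^ 2 :=
        Real.pow_arith_mean_le_arith_mean_pow _ _ _ (fun i _ => hγ i) hγsum
          (fun i _ => sub_nonneg.mpr (hb1 i)) 2

theorem randomized_first_price_bound_general {ι : Type*} [Fintype ι]
    (γ : ι → ℝ) (hγ : ∀ i, 0 ≤ γ i) (hγsum : ∑ i, γ i = 1)
    (B : ℝ) (hB1 : B < 1)
    (b : ι → ℝ) (hb0 : ∀ i, 0 ≤ b i) (hb1 : ∀ i, b i ≤ 1)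
    (hbud : ∑ i, γ i * b i ≤ B) :
    (1 - B) ^ 2 / 2
      ≤ ∫ X : ι → ℝ,
          (∑ i, γ i * (1 - X i) * (if b i < X i then (1 : ℝ) else 0))
          ∂(Measure.pi fun _ : ι => volume.restrict (Set.Icc (0 : ℝ) 1)) := by
  have : IsProbabilityMeasure (volume.restrict (Icc (0 : ℝ) 1)) :=
    ⟨by simp [Real.volume_Icc]⟩
  simp only [mul_assoc]
  rw [integral_sum_comp_eval (f := fun i x => γ i * ((1 - x) * if b i < x then 1 else 0))
    fun i => (integrableOn_one_sub_mul_boole (b i)).const_mul (γ i)]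
  simp only [integral_const_mul, integral_Icc_one_sub_mul_boole (hb0 _) (hb1 _), mul_div_assoc',
    ← Finset.sum_div]
  gcongr
  exact one_sub_sq_le_sum_mul_one_sub_sq hγ hγsum hb1 hB1 hbud

/-- Theorem 4: the randomized strategy in the simultaneous first-price auction
    guarantees an expected profit of at least (1 − B)²/2. -/
theorem randomized_first_price_bound {ι : Type*} [Fintype ι]
    (γ : ι → ℝ) (hγ : ∀ i, 0 ≤ γ i) (hγsum : ∑ i, γ i = 1)
    (B : ℝ) (hB0 : 0 < B) (hB1 : B < 1)
    (b : ι → ℝ) (hb0 : ∀ i, 0 ≤ b i) (hb1 : ∀ i, b i ≤ 1)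
    (hbud : ∑ i, γ i * b i ≤ B) :
    (1 - B) ^ 2 / 2
      ≤ ∫ X : ι → ℝ,
          (∑ i, γ i * (1 - X i) * (if b i < X i then (1 : ℝ) else 0))
          ∂(Measure.pi fun _ : ι => volume.restrict (Set.Icc (0 : ℝ) 1)) :=
  randomized_first_price_bound_general γ hγ hγsum B hB1 b hb0 hb1 hbud
end

section
/- Let m and k be integers with 2 ≤ k ≤ m, let B be a real number with 0 < B < 1, and let v : ℕ → ℝ be monotone nondecreasing with v(0) = 0, v(i + j) ≤ v(i) + v(j) for all naturals i, j, and v(m) = 1. Set q = ⌈m/k⌉. Then v(q) − q·B/(m − q + 1) ≥ 1/k − B/(k−1) − (1/m)·(B·k/(k−1)). -/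
/-!
Since `m ≤ k q` for `q = ⌈m/k⌉`, monotonicity and subadditivity give `1 = v m ≤ k · v q`, so the
value of the `q` items is at least `1/k`. For the price, `k q < m + k` gives
`(m + k)(m - q + 1) - q m (k - 1) = (m + 1)(m + k - k q) ≥ 0`, i.e.
`q / (m - q + 1) ≤ (m + k) / (m (k - 1))`, and `B (m + k) / (m (k - 1))` is exactly
`B / (k - 1) + (1 / m) (B k / (k - 1))`.
-/

theorem Subadditive.apply_mul_le {u : ℕ → ℝ} (hu : Subadditive u) {k : ℕ} (hk : k ≠ 0) (n : ℕ) :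
    u (k * n) ≤ k * u n := by
  obtain ⟨j, rfl⟩ := Nat.exists_eq_succ_of_ne_zero hk
  have h := hu.apply_mul_add_le j n n
  rw [show (j + 1) * n = j * n + n by ring]
  push_cast
  linarith

theorem Subadditive.apply_le_mul_apply_ceil_div {u : ℕ → ℝ} (hu : Subadditive u)
    (hmono : Monotone u) (m : ℕ) {k : ℕ} (hk : k ≠ 0) :
    u m ≤ k * u ⌈(m : ℝ) / k⌉₊ := by
  have hle : m ≤ k * ⌈(m : ℝ) / k⌉₊ := by
    have h := Nat.le_ceil ((m : ℝ) / k)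
    rw [div_le_iff₀ (by positivity)] at h
    exact_mod_cast (by linarith : (m : ℝ) ≤ k * ⌈(m : ℝ) / k⌉₊)
  exact (hmono hle).trans (hu.apply_mul_le hk _)

theorem mul_div_sub_add_one_le {m k q B : ℝ} (hm : 0 < m) (hk : 1 < k) (hq : q < m / k + 1)
    (hB : 0 ≤ B) : q * B / (m - q + 1) ≤ B * (m + k) / (m * (k - 1)) := by
  have hkq : k * q < m + k := by
    have := mul_lt_mul_of_pos_left hq (by linarith : 0 < k)
    rwa [mul_add, mul_div_cancel₀ _ (by linarith), mul_one] at this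
  have hden : 0 < m - q + 1 := by nlinarith
  rw [div_le_div_iff₀ hden (by nlinarith)]
  have hgap : 0 ≤ B * ((m + 1) * (m + k - k * q)) := by
    apply mul_nonneg hB; apply mul_nonneg <;> linarith
  nlinarith [hgap]

theorem subadditive_identical_lower_bound_general (m k : ℕ) (hk : 2 ≤ k) (hkm : k ≤ m)
    (B : ℝ) (hB0 : 0 < B)
    (v : ℕ → ℝ) (hmono : Monotone v)
    (hsub : ∀ i j : ℕ, v (i + j) ≤ v i + v j) (hnorm : v m = 1) :
    1 / (k : ℝ) - B / ((k : ℝ) - 1) - (1 / (m : ℝ)) * (B * k / ((k : ℝ) - 1))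
      ≤ v ⌈(m : ℝ) / k⌉₊
          - (⌈(m : ℝ) / k⌉₊ : ℝ) * B / ((m : ℝ) - (⌈(m : ℝ) / k⌉₊ : ℝ) + 1) := by
  have hk1 : (1 : ℝ) < k := by exact_mod_cast hk
  have hm : (0 : ℝ) < m := by exact_mod_cast (by omega : 0 < m)
  have hvalue : 1 / (k : ℝ) ≤ v ⌈(m : ℝ) / k⌉₊ := by
    have h := Subadditive.apply_le_mul_apply_ceil_div hsub hmono m (by omega : k ≠ 0)
    rw [hnorm] at h
    rw [div_le_iff₀ (by linarith)]
    linarith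
  have hprice := mul_div_sub_add_one_le hm hk1 (Nat.ceil_lt_add_one (by positivity)) hB0.le
  have hbudget : B / ((k : ℝ) - 1) + (1 / (m : ℝ)) * (B * k / ((k : ℝ) - 1))
      = B * (m + k) / (m * (k - 1)) := by
    field_simp [sub_ne_zero.mpr hk1.ne']
  linarith

/-- Quantitative content of Theorem 5: the constant-price strategy on m identical
    items with target allocation q = ⌈m/k⌉ yields profit at least
    t_{k−1}(B) − (1/m)·(B·k/(k−1)). -/
theorem subadditive_identical_lower_bound (m k : ℕ) (hk : 2 ≤ k) (hkm : k ≤ m)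
    (B : ℝ) (hB0 : 0 < B) (hB1 : B < 1)
    (v : ℕ → ℝ) (h0 : v 0 = 0) (hmono : Monotone v)
    (hsub : ∀ i j : ℕ, v (i + j) ≤ v i + v j) (hnorm : v m = 1) :
    1 / (k : ℝ) - B / ((k : ℝ) - 1) - (1 / (m : ℝ)) * (B * k / ((k : ℝ) - 1))
      ≤ v ⌈(m : ℝ) / k⌉₊
          - (⌈(m : ℝ) / k⌉₊ : ℝ) * B / ((m : ℝ) - (⌈(m : ℝ) / k⌉₊ : ℝ) + 1) :=
  subadditive_identical_lower_bound_general m k hk hkm B hB0 v hmono hsub hnorm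
end
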